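/- Theorem 1 (MSE upper bound): under the setup of the deconvolution estimator ĥat{f}_E with T i.i.d. samples, truncation Kπ, and Y ~ Exp(λ_Y) with λ_Y = Kπ/o, the MSE satisfies E[(f_E(x) - ĥat{f}_E(x))²] ≤ (1/(4π²))·(∫_{|w|≥Kπ} e^{iwx} F{f_E}(w) dw)² + (K²/(4T))·[sqrt(1 + o²) + ln(o + sqrt(1+o²))/o]². -/

import Mathlib

/-!
The estimator is `(1/(2πT)) ∑ₜ g(zₜ)` with `g(z) = ∫_{-Kπ}^{Kπ} e^{-iw(z-x)} (1 + iw/λ) dw`.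
Since `1 + iw/λ` is the reciprocal of the Fourier transform `λ/(λ + iw)` of `Exp(λ)`, Fubini and the
independence of `e` and `Y` give `E g(Z) = ∫_{-Kπ}^{Kπ} e^{iwx} F{f_E}(w) dw`, so by Fourier
inversion the bias is `1/(2π)` times the integral over `|w| ≥ Kπ`. The `g(zₜ)` are pairwise
independent, so the mean square error is the squared bias plus `1/(4π²T²)` times the sum of their
variances, each at most `sup ‖g‖² ≤ (∫_{-Kπ}^{Kπ} √(1 + w²/λ²) dw)²`, an integral computed in
closed form with `arsinh`.
-/

open MeasureTheory ProbabilityTheory Real Set Complex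
open scoped InnerProductSpace

section MeanSquare

variable {Ω E : Type*} [MeasurableSpace Ω] {μ : Measure Ω} [IsProbabilityMeasure μ]
  [NormedAddCommGroup E] [InnerProductSpace ℝ E] [CompleteSpace E]

lemma integral_norm_sub_sq {W : Ω → E} (hW : MemLp W 2 μ) (c : E) :
    ∫ ω, ‖c - W ω‖ ^ 2 ∂μ = ‖c - μ[W]‖ ^ 2 + ∫ ω, ‖W ω - μ[W]‖ ^ 2 ∂μ := by
  have hV : MemLp (fun ω ↦ W ω - μ[W]) 2 μ := hW.sub (memLp_const _)
  have hV_int : Integrable (fun ω ↦ W ω - μ[W]) μ := hV.integrable one_le_two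
  have hV_mean : ∫ ω, (W ω - μ[W]) ∂μ = 0 := by
    simp [integral_sub (hW.integrable one_le_two) (integrable_const _)]
  calc ∫ ω, ‖c - W ω‖ ^ 2 ∂μ
      = ∫ ω, (‖c - μ[W]‖ ^ 2 - 2 * ⟪c - μ[W], W ω - μ[W]⟫_ℝ + ‖W ω - μ[W]‖ ^ 2) ∂μ := by
        congr with ω
        rw [← norm_sub_sq_real, sub_sub_sub_cancel_right]
    _ = ‖c - μ[W]‖ ^ 2 + ∫ ω, ‖W ω - μ[W]‖ ^ 2 ∂μ := by
        rw [integral_add _ (hV.integrable_norm_pow two_ne_zero), integral_sub (integrable_const _),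
          integral_const_mul, integral_inner hV_int, hV_mean]
        · simp
        · exact (hV_int.const_inner _).const_mul _
        · exact (integrable_const _).sub ((hV_int.const_inner _).const_mul _)

lemma integral_norm_sub_integral_sq_le {W : Ω → E} (hW : MemLp W 2 μ) {C : ℝ}
    (hC : ∀ᵐ ω ∂μ, ‖W ω‖ ≤ C) : ∫ ω, ‖W ω - μ[W]‖ ^ 2 ∂μ ≤ C ^ 2 := by
  have h := integral_norm_sub_sq hW 0
  simp only [zero_sub, norm_neg] at h
  have hle : ∫ ω, ‖W ω‖ ^ 2 ∂μ ≤ ∫ _, C ^ 2 ∂μ :=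
    integral_mono_ae (hW.integrable_norm_pow two_ne_zero) (integrable_const _)
      (hC.mono fun ω hω ↦ pow_le_pow_left₀ (norm_nonneg _) hω 2)
  simp only [integral_const, probReal_univ, one_smul] at hle
  nlinarith [sq_nonneg ‖μ[W]‖]

variable [MeasurableSpace E] [BorelSpace E]

lemma ProbabilityTheory.IndepFun.integral_inner_sub_integral_eq_zero {X Y : Ω → E}
    (h : IndepFun X Y μ) (hX : Integrable X μ) (hY : Integrable Y μ) :
    ∫ ω, ⟪X ω - μ[X], Y ω - μ[Y]⟫_ℝ ∂μ = 0 := by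
  have h' : IndepFun (fun ω ↦ X ω - μ[X]) (fun ω ↦ Y ω - μ[Y]) μ :=
    h.comp (measurable_id.sub_const _) (measurable_id.sub_const _)
  calc ∫ ω, ⟪X ω - μ[X], Y ω - μ[Y]⟫_ℝ ∂μ
      = ⟪∫ ω, (X ω - μ[X]) ∂μ, ∫ ω, (Y ω - μ[Y]) ∂μ⟫_ℝ :=
        h'.integral_bilin (hX.sub (integrable_const _)) (hY.sub (integrable_const _)) (innerSL ℝ)
    _ = 0 := by simp [integral_sub hX (integrable_const _), integral_sub hY (integrable_const _)]

variable {ι : Type*} [Fintype ι] {X : ι → Ω → E}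

lemma integral_norm_sum_sub_integral_sq (hind : Pairwise fun s t ↦ IndepFun (X s) (X t) μ)
    (hX : ∀ t, MemLp (X t) 2 μ) :
    ∫ ω, ‖∑ t, (X t ω - μ[X t])‖ ^ 2 ∂μ = ∑ t, ∫ ω, ‖X t ω - μ[X t]‖ ^ 2 ∂μ := by
  have hV : ∀ t, MemLp (fun ω ↦ X t ω - μ[X t]) 2 μ := fun t ↦ (hX t).sub (memLp_const _)
  have hint : ∀ s t, Integrable (fun ω ↦ ⟪X s ω - μ[X s], X t ω - μ[X t]⟫_ℝ) μ :=
    fun s t ↦ ((hV s).norm.integrable_mul (hV t).norm).mono' ((hV s).1.inner (hV t).1)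
      (.of_forall fun ω ↦ (norm_inner_le_norm _ _).trans_eq rfl)
  calc ∫ ω, ‖∑ t, (X t ω - μ[X t])‖ ^ 2 ∂μ
      = ∑ s, ∑ t, ∫ ω, ⟪X s ω - μ[X s], X t ω - μ[X t]⟫_ℝ ∂μ := by
        simp_rw [← real_inner_self_eq_norm_sq, sum_inner, inner_sum]
        rw [integral_finsetSum _ fun s _ ↦ integrable_finsetSum _ fun t _ ↦ hint s t]
        simp_rw [integral_finsetSum _ fun t _ ↦ hint _ t]
    _ = ∑ t, ∫ ω, ‖X t ω - μ[X t]‖ ^ 2 ∂μ := by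
        refine Finset.sum_congr rfl fun s _ ↦ ?_
        rw [Finset.sum_eq_single s]
        · simp_rw [real_inner_self_eq_norm_sq]
        · exact fun t _ hts ↦ (hind hts.symm).integral_inner_sub_integral_eq_zero
            ((hX s).integrable one_le_two) ((hX t).integrable one_le_two)
        · simp

lemma integral_norm_sub_smul_sum_sq (hind : Pairwise fun s t ↦ IndepFun (X s) (X t) μ)
    (hX : ∀ t, MemLp (X t) 2 μ) (c : E) (a : ℝ) :
    ∫ ω, ‖c - a • ∑ t, X t ω‖ ^ 2 ∂μ
      = ‖c - a • ∑ t, μ[X t]‖ ^ 2 + a ^ 2 * ∑ t, ∫ ω, ‖X t ω - μ[X t]‖ ^ 2 ∂μ := by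
  have hW : MemLp (fun ω ↦ a • ∑ t, X t ω) 2 μ := (memLp_finsetSum _ fun t _ ↦ hX t).const_smul a
  have hmean : ∫ ω, a • ∑ t, X t ω ∂μ = a • ∑ t, μ[X t] := by
    rw [integral_smul, integral_finsetSum _ fun t _ ↦ (hX t).integrable one_le_two]
  rw [integral_norm_sub_sq hW c, hmean, ← integral_norm_sum_sub_integral_sq hind hX,
    ← integral_const_mul]
  congr with ω
  rw [← smul_sub, ← Finset.sum_sub_distrib, norm_smul, mul_pow, Real.norm_eq_abs, sq_abs]

lemma integral_norm_sub_smul_sum_sq_le (hind : Pairwise fun s t ↦ IndepFun (X s) (X t) μ)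
    (hX : ∀ t, MemLp (X t) 2 μ) {B : ℝ} (hB : ∀ t, ∀ᵐ ω ∂μ, ‖X t ω‖ ≤ B) {m : E}
    (hm : ∀ t, μ[X t] = m) (c : E) (a : ℝ) :
    ∫ ω, ‖c - a • ∑ t, X t ω‖ ^ 2 ∂μ
      ≤ ‖c - (a * Fintype.card ι) • m‖ ^ 2 + a ^ 2 * (Fintype.card ι * B ^ 2) := by
  have hsum : ∑ t, μ[X t] = (Fintype.card ι : ℝ) • m := by
    simp [hm, Finset.sum_const, Finset.card_univ, ← Nat.cast_smul_eq_nsmul ℝ]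
  rw [integral_norm_sub_smul_sum_sq hind hX, hsum, smul_smul]
  gcongr
  simpa using Finset.sum_le_sum (s := .univ) fun t _ ↦
    integral_norm_sub_integral_sq_le (hX t) (hB t)

end MeanSquare

lemma integral_cexp_mul_expMeasure {r : ℝ} (hr : 0 < r) {s : ℂ} (hs : s.re < r) :
    ∫ y, cexp (s * y) ∂expMeasure r = r / (r - s) := by
  have hdensity : ∀ y : ℝ, (exponentialPDF r y).toReal • cexp (s * y)
      = (Ici 0).indicator (fun y : ℝ ↦ r * cexp ((s - r) * y)) y := by
    intro y
    rcases le_or_gt 0 y with hy | hy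
    · rw [indicator_of_mem (mem_Ici.mpr hy), exponentialPDF_of_nonneg hy,
        ENNReal.toReal_ofReal (by positivity), Complex.real_smul]
      push_cast
      rw [mul_assoc, ← Complex.exp_add]
      ring_nf
    · rw [indicator_of_notMem (by simpa using hy), exponentialPDF_of_neg hy]
      simp
  have hsr : (s - r).re < 0 := by simpa using hs
  have hsr' : (r : ℂ) - s ≠ 0 := sub_ne_zero.mpr fun h ↦ by simp [← h] at hs
  calc ∫ y, cexp (s * y) ∂expMeasure r
      = ∫ y, (exponentialPDF r y).toReal • cexp (s * y) :=
        integral_withDensity_eq_integral_toReal_smul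
          (measurable_exponentialPDFReal r).ennreal_ofReal
          (.of_forall fun _ ↦ ENNReal.ofReal_lt_top) _
    _ = r * ∫ y in Ioi (0 : ℝ), cexp ((s - r) * y) := by
        simp_rw [hdensity]
        rw [integral_indicator measurableSet_Ici, integral_Ici_eq_integral_Ioi, integral_const_mul]
    _ = r / (r - s) := by
        rw [integral_exp_mul_complex_Ioi hsr, ← neg_sub]
        field_simp
        simp

lemma integral_sqrt_one_add_sq (a b : ℝ) :
    ∫ u in a..b, √(1 + u ^ 2)
      = (b * √(1 + b ^ 2) + arsinh b) / 2 - (a * √(1 + a ^ 2) + arsinh a) / 2 := by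
  have hderiv (u : ℝ) :
      HasDerivAt (fun u : ℝ ↦ (u * √(1 + u ^ 2) + arsinh u) / 2) √(1 + u ^ 2) u := by
    have hpos : 0 < 1 + u ^ 2 := by positivity
    have hsqrt : HasDerivAt (fun u : ℝ ↦ √(1 + u ^ 2)) (u / √(1 + u ^ 2)) u := by
      convert ((hasDerivAt_pow 2 u).const_add 1).sqrt hpos.ne' using 1
      push_cast
      field_simp
    refine ((((hasDerivAt_id' u).mul hsqrt).add (hasDerivAt_arsinh u)).div_const 2).congr_deriv ?_
    have hsq : √(1 + u ^ 2) ^ 2 = 1 + u ^ 2 := sq_sqrt hpos.le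
    field_simp
    rw [hsq]
    ring
  exact intervalIntegral.integral_eq_sub_of_hasDerivAt (fun u _ ↦ hderiv u)
    ((by fun_prop : Continuous fun u : ℝ ↦ √(1 + u ^ 2)).intervalIntegrable a b)

lemma norm_one_add_I_mul_div (w r : ℝ) : ‖1 + I * w / r‖ = √(1 + (w / r) ^ 2) := by
  rw [show 1 + I * w / r = ((1 : ℝ) : ℂ) + ((w / r : ℝ) : ℂ) * I by push_cast; ring,
    Complex.norm_def, Complex.normSq_add_mul_I]
  norm_num

lemma norm_cexp_neg_I_mul (w y : ℝ) : ‖cexp (-I * w * y)‖ = 1 := by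
  simp [Complex.norm_exp]

noncomputable def deconvKernel (r a x z : ℝ) : ℂ :=
  ∫ w in (-a)..a, cexp (-I * w * (z - x)) * (1 + I * w / r)

lemma continuous_deconvKernel (r a x : ℝ) : Continuous (deconvKernel r a x) :=
  intervalIntegral.continuous_parametric_intervalIntegral_of_continuous' (by fun_prop) _ _

lemma norm_deconvKernel_le {r a : ℝ} (hr : r ≠ 0) (ha : 0 < a) (x z : ℝ) :
    ‖deconvKernel r a x z‖ ≤ a * (√(1 + (a / r) ^ 2) + arsinh (a / r) / (a / r)) :=
  calc ‖deconvKernel r a x z‖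
      ≤ ∫ w in (-a)..a, ‖cexp (-I * w * (z - x)) * (1 + I * w / r)‖ :=
        intervalIntegral.norm_integral_le_integral_norm (neg_le_self ha.le)
    _ = ∫ w in (-a)..a, √(1 + (w / r) ^ 2) := by
        congr with w
        rw [norm_mul, ← ofReal_sub, norm_cexp_neg_I_mul, one_mul, norm_one_add_I_mul_div]
    _ = a * (√(1 + (a / r) ^ 2) + arsinh (a / r) / (a / r)) := by
        rw [intervalIntegral.integral_comp_div (fun u ↦ √(1 + u ^ 2)) hr,
          integral_sqrt_one_add_sq, neg_div, arsinh_neg, neg_sq, smul_eq_mul]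
        field_simp
        ring

section Deconvolution

variable {Ω : Type*} [MeasurableSpace Ω] {μ : Measure Ω} {e Y : Ω → ℝ} {r : ℝ}

lemma integral_deconvKernel_integrand (hindep : IndepFun e Y μ) (he : Measurable e)
    (hY : Measurable Y) (hr : 0 < r) (hYr : μ.map Y = expMeasure r) (w x : ℝ) :
    ∫ ω, cexp (-I * w * ((e ω + Y ω : ℝ) - x)) * (1 + I * w / r) ∂μ
      = cexp (I * w * x) * ∫ ω, cexp (-I * w * e ω) ∂μ := by
  have hfactor : ∀ ω, cexp (-I * w * ((e ω + Y ω : ℝ) - x)) * (1 + I * w / r)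
      = cexp (-I * w * e ω) * cexp (-I * w * Y ω) * (cexp (I * w * x) * (1 + I * w / r)) := by
    intro ω
    rw [← Complex.exp_add, mul_assoc, ← mul_assoc (cexp _), ← Complex.exp_add]
    push_cast
    ring_nf
  have hY_transform : ∫ ω, cexp (-I * w * Y ω) ∂μ = r / (r + I * w) := by
    rw [← integral_map (f := fun y : ℝ ↦ cexp (-I * w * y)) hY.aemeasurable (by fun_prop), hYr,
      integral_cexp_mul_expMeasure hr (by simp [hr]), neg_mul, sub_neg_eq_add]
  have hr0 : (r : ℂ) ≠ 0 := ofReal_ne_zero.mpr hr.ne'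
  have hrw : (r : ℂ) + I * w ≠ 0 := fun h ↦ by simpa [hr.ne'] using congrArg Complex.re h
  simp_rw [hfactor]
  rw [integral_mul_const, hindep.integral_fun_comp_mul_comp (f := fun y : ℝ ↦ cexp (-I * w * y))
    (g := fun y : ℝ ↦ cexp (-I * w * y)) he.aemeasurable hY.aemeasurable (by fun_prop)
    (by fun_prop), hY_transform]
  field_simp

lemma integral_deconvKernel [IsFiniteMeasure μ] (hindep : IndepFun e Y μ) (he : Measurable e)
    (hY : Measurable Y) (hr : 0 < r) (hYr : μ.map Y = expMeasure r) {Z : Ω → ℝ}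
    (hZ : Measurable Z) (hZ_law : μ.map Z = μ.map fun ω ↦ e ω + Y ω) (a x : ℝ) :
    ∫ ω, deconvKernel r a x (Z ω) ∂μ
      = ∫ w in (-a)..a, cexp (I * w * x) * ∫ ω, cexp (-I * w * e ω) ∂μ := by
  have hg := (continuous_deconvKernel r a x).aestronglyMeasurable (μ := μ.map Z)
  rw [← integral_map hZ.aemeasurable hg, hZ_law,
    integral_map (by fun_prop : Measurable fun ω ↦ e ω + Y ω).aemeasurable (hZ_law ▸ hg)]
  have hint : Integrable (Function.uncurry fun (w : ℝ) ω ↦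
      cexp (-I * w * ((e ω + Y ω : ℝ) - x)) * (1 + I * w / r))
      ((volume.restrict (uIoc (-a) a)).prod μ) := by
    refine Integrable.mono' (g := fun p ↦ ‖1 + I * p.1 / r‖)
      ((Continuous.integrableOn_uIoc (f := fun w : ℝ ↦ 1 + I * w / r)
        (by fun_prop)).norm.comp_fst μ)
      (by fun_prop) (.of_forall fun ⟨w, ω⟩ ↦ ?_)
    rw [Function.uncurry_apply_pair, norm_mul, ← ofReal_sub, norm_cexp_neg_I_mul, one_mul]
  simp only [deconvKernel]
  rw [← intervalIntegral_integral_swap hint]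
  exact intervalIntegral.integral_congr fun w _ ↦
    integral_deconvKernel_integrand hindep he hY hr hYr w x

end Deconvolution

lemma integral_sub_intervalIntegral_eq_setIntegral_le_abs {E : Type*} [NormedAddCommGroup E]
    [NormedSpace ℝ E] {f : ℝ → E} (hf : Integrable f) {a : ℝ} (ha : 0 ≤ a) :
    (∫ w, f w) - ∫ w in (-a)..a, f w = ∫ w in {w | a ≤ |w|}, f w := by
  have hcompl : {w : ℝ | a ≤ |w|} = (Ioo (-a) a)ᶜ := by
    ext w
    simp only [mem_compl_iff, mem_Ioo, ← abs_lt, not_lt]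
    rfl
  rw [intervalIntegral.integral_of_le (neg_le_self ha), integral_Ioc_eq_integral_Ioo, hcompl]
  exact sub_eq_of_eq_add' (integral_add_compl measurableSet_Ioo hf).symm

theorem mse_upper_bound_general {Ω : Type*} [MeasurableSpace Ω]
    (μ : Measure Ω) [IsProbabilityMeasure μ] (e Y : Ω → ℝ)
    (hem : Measurable e) (hYm : Measurable Y)
    (fE : ℝ → ℝ)
    (lY : ℝ) (hlY : 0 < lY) (hY : Measure.map Y μ = expMeasure lY)
    (hindep : IndepFun e Y μ)
    (FfE : ℝ → ℂ) (hFfE : FfE = fun w : ℝ => ∫ ω, Complex.exp (-Complex.I * w * e ω) ∂μ)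
    (hFint : Integrable FfE)
    (T : ℕ) (hT : 0 < T) (z : Fin T → Ω → ℝ) (hzm : ∀ t, Measurable (z t))
    (hziid : iIndepFun z μ)
    (hzdist : ∀ t, Measure.map (z t) μ = Measure.map (fun ω => e ω + Y ω) μ)
    (K x : ℝ) (hK : 0 < K) (o : ℝ) (ho : o = K * π / lY)
    (hinv : (fE x : ℂ)
      = (1 / (2 * (π : ℂ))) * ∫ w : ℝ, Complex.exp (Complex.I * w * x) * FfE w) :
    (∫ ω, ‖(fE x : ℂ) - (1 / (2 * (π : ℂ) * T)) * ∑ t, (∫ w in (-(K * π))..(K * π),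
          Complex.exp (-Complex.I * w * ((z t ω : ℂ) - x)) * (1 + Complex.I * w / lY))‖ ^ 2 ∂μ)
      ≤ (1 / (4 * π ^ 2))
          * ‖∫ w in {w : ℝ | K * π ≤ |w|}, Complex.exp (Complex.I * w * x) * FfE w‖ ^ 2
        + K ^ 2 / (4 * T)
          * (Real.sqrt (1 + o ^ 2) + Real.log (o + Real.sqrt (1 + o ^ 2)) / o) ^ 2 := by
  have ha : 0 < K * π := by positivity
  have hg := continuous_deconvKernel lY (K * π) x
  set X : Fin T → Ω → ℂ := fun t ω ↦ deconvKernel lY (K * π) x (z t ω)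
  have hX_le : ∀ t, ∀ᵐ ω ∂μ,
      ‖X t ω‖ ≤ K * π * (√(1 + o ^ 2) + Real.log (o + √(1 + o ^ 2)) / o) := fun t ↦
    .of_forall fun ω ↦ (norm_deconvKernel_le hlY.ne' ha x (z t ω)).trans_eq (by rw [← ho]; rfl)
  have hX : ∀ t, MemLp (X t) 2 μ := fun t ↦
    .of_bound (hg.measurable.comp (hzm t)).aestronglyMeasurable _ (hX_le t)
  have hind : Pairwise fun s t ↦ IndepFun (X s) (X t) μ := fun s t hst ↦
    (hziid.indepFun hst).comp hg.measurable hg.measurable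
  have hmean : ∀ t, μ[X t] = ∫ w in (-(K * π))..(K * π), cexp (I * w * x) * FfE w := fun t ↦ by
    rw [hFfE]
    exact integral_deconvKernel hindep hem hYm hlY hY (hzm t) (hzdist t) _ _
  have hint : Integrable fun w : ℝ ↦ cexp (I * w * x) * FfE w :=
    hFint.bdd_mul (c := 1) (by fun_prop) (.of_forall fun w ↦ by simp [Complex.norm_exp])
  have hinv' : (fE x : ℂ) = (1 / (2 * π) : ℝ) • ∫ w : ℝ, cexp (I * w * x) * FfE w := by
    rw [hinv, Complex.real_smul]
    push_cast
    rfl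
  have hT0 : (T : ℝ) ≠ 0 := by exact_mod_cast hT.ne'
  calc ∫ ω, ‖(fE x : ℂ) - (1 / (2 * (π : ℂ) * T)) * ∑ t, X t ω‖ ^ 2 ∂μ
      = ∫ ω, ‖(fE x : ℂ) - (1 / (2 * π * T) : ℝ) • ∑ t, X t ω‖ ^ 2 ∂μ := by
        simp_rw [Complex.real_smul]
        push_cast
        rfl
    _ ≤ _ := integral_norm_sub_smul_sum_sq_le hind hX hX_le hmean _ _
    _ = _ := by
        rw [Fintype.card_fin, show (1 / (2 * π * T) * T : ℝ) = 1 / (2 * π) by field_simp, hinv',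
          ← smul_sub, integral_sub_intervalIntegral_eq_setIntegral_le_abs hint ha.le, norm_smul,
          mul_pow, Real.norm_of_nonneg (by positivity)]
        congr 1
        · ring
        · field_simp
          ring

/-- Theorem 1 (MSE upper bound for the deconvolution estimator): with `T` i.i.d. samples
`z_t` of `Z = e + Y`, `Y ~ Exp(λ_Y)`, truncation `Kπ` and `o = Kπ/λ_Y`,
`E[(f_E(x) - ĥ(x))²] ≤ (1/4π²)(∫_{|w|≥Kπ} e^{iwx}F{f_E}(w) dw)²
  + (K²/4T)[sqrt(1+o²) + ln(o+sqrt(1+o²))/o]²`. -/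
theorem mse_upper_bound {Ω : Type*} [MeasurableSpace Ω]
    (μ : Measure Ω) [IsProbabilityMeasure μ] (e Y : Ω → ℝ)
    (hem : Measurable e) (hYm : Measurable Y)
    (fE : ℝ → ℝ)
    (hdens : Measure.map e μ = volume.withDensity (fun x => ENNReal.ofReal (fE x)))
    (lY : ℝ) (hlY : 0 < lY) (hY : Measure.map Y μ = expMeasure lY)
    (hindep : IndepFun e Y μ)
    (FfE : ℝ → ℂ) (hFfE : FfE = fun w : ℝ => ∫ ω, Complex.exp (-Complex.I * w * e ω) ∂μ)
    (hFint : Integrable FfE)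
    (T : ℕ) (hT : 0 < T) (z : Fin T → Ω → ℝ) (hzm : ∀ t, Measurable (z t))
    (hziid : iIndepFun z μ)
    (hzdist : ∀ t, Measure.map (z t) μ = Measure.map (fun ω => e ω + Y ω) μ)
    (K x : ℝ) (hK : 0 < K) (o : ℝ) (ho : o = K * π / lY)
    (hinv : (fE x : ℂ)
      = (1 / (2 * (π : ℂ))) * ∫ w : ℝ, Complex.exp (Complex.I * w * x) * FfE w) :
    (∫ ω, ‖(fE x : ℂ) - (1 / (2 * (π : ℂ) * T)) * ∑ t, (∫ w in (-(K * π))..(K * π),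
          Complex.exp (-Complex.I * w * ((z t ω : ℂ) - x)) * (1 + Complex.I * w / lY))‖ ^ 2 ∂μ)
      ≤ (1 / (4 * π ^ 2))
          * ‖∫ w in {w : ℝ | K * π ≤ |w|}, Complex.exp (Complex.I * w * x) * FfE w‖ ^ 2
        + K ^ 2 / (4 * T)
          * (Real.sqrt (1 + o ^ 2) + Real.log (o + Real.sqrt (1 + o ^ 2)) / o) ^ 2 :=
  mse_upper_bound_general μ e Y hem hYm fE lY hlY hY hindep FfE hFfE hFint T hT z hzm hziid hzdist K
    x hK o ho hinv
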